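/- Let α > 0, ρ > 0, η, κ, β ∈ ℝ, and 0 ≤ a < x. Let f, g be two positive functions on [a,x] such that I(fg)(x) < ∞ and I((f+g)²)(x) < ∞, where I denotes the generalized fractional integral ρI^{α,β}_{a+,η,κ}. If there exist real constants 0 < m ≤ M such that m ≤ f(t)/g(t) ≤ M for all t ∈ [a,x], then (1/M) · I(fg)(x) ≤ (1/((m+1)(M+1))) · I((f+g)²)(x) ≤ (1/m) · I(fg)(x). -/
import Mathlib


open MeasureTheory

/-- The left-sided generalized (Katugampola) fractional integral
`ρI^{α,β}_{a+,η,κ} f (x)`. -/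
noncomputable def katI (α ρ η κ β a x : ℝ) (f : ℝ → ℝ) : ℝ :=
  (ρ ^ (1 - β) * x ^ κ / Real.Gamma α) *
    ∫ t in a..x, t ^ (ρ * (η + 1) - 1) * (x ^ ρ - t ^ ρ) ^ (α - 1) * f t

/-- Finiteness of the generalized fractional integral, expressed as integrability of the
kernel-weighted integrand. -/
def katIntegrable (α ρ η κ β a x : ℝ) (f : ℝ → ℝ) : Prop :=
  IntervalIntegrable
    (fun t => t ^ (ρ * (η + 1) - 1) * (x ^ ρ - t ^ ρ) ^ (α - 1) * f t)
    volume a x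

lemma katI_div_mono (α ρ η κ β a x p q : ℝ) (hα : 0 < α) (hρ : 0 < ρ)
    (ha : 0 ≤ a) (hax : a < x) (F G : ℝ → ℝ)
    (hF : katIntegrable α ρ η κ β a x F) (hG : katIntegrable α ρ η κ β a x G)
    (hp : 0 < p) (hq : 0 < q)
    (hpt : ∀ t ∈ Set.Icc a x, q * F t ≤ p * G t) :
    (1 / p) * katI α ρ η κ β a x F ≤ (1 / q) * katI α ρ η κ β a x G := by
  have hx : 0 < x := ha.trans_lt hax
  have hC : 0 ≤ ρ ^ (1 - β) * x ^ κ / Real.Gamma α :=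
    div_nonneg (mul_nonneg (Real.rpow_nonneg hρ.le _) (Real.rpow_nonneg hx.le _))
      (Real.Gamma_pos_of_pos hα).le
  have hKnn : ∀ t ∈ Set.Icc a x,
      0 ≤ t ^ (ρ * (η + 1) - 1) * (x ^ ρ - t ^ ρ) ^ (α - 1) := by
    intro t ht
    have ht0 : 0 ≤ t := ha.trans ht.1
    have h2 : t ^ ρ ≤ x ^ ρ := Real.rpow_le_rpow ht0 ht.2 hρ.le
    exact mul_nonneg (Real.rpow_nonneg ht0 _) (Real.rpow_nonneg (by linarith) _)
  have hint : (∫ t in a..x, q * (t ^ (ρ * (η + 1) - 1) * (x ^ ρ - t ^ ρ) ^ (α - 1) * F t)) ≤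
      ∫ t in a..x, p * (t ^ (ρ * (η + 1) - 1) * (x ^ ρ - t ^ ρ) ^ (α - 1) * G t) := by
    apply intervalIntegral.integral_mono_on hax.le (hF.const_mul q) (hG.const_mul p)
    intro t ht
    have hK := hKnn t ht
    have h := hpt t ht
    nlinarith [mul_le_mul_of_nonneg_left h hK]
  rw [intervalIntegral.integral_const_mul, intervalIntegral.integral_const_mul] at hint
  have hgoal : ∀ X Y : ℝ, q * X ≤ p * Y → 1 / p * X ≤ 1 / q * Y := by
    intro X Y h
    rw [div_mul_eq_mul_div, div_mul_eq_mul_div, div_le_div_iff₀ hp hq]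
    nlinarith
  apply hgoal
  unfold katI
  nlinarith [mul_le_mul_of_nonneg_left hint hC]

/-- Two-sided product bound via the generalized fractional integral. -/
theorem product_two_sided_katugampola
    (α ρ η κ β m M a x : ℝ) (hα : 0 < α) (hρ : 0 < ρ)
    (ha : 0 ≤ a) (hax : a < x)
    (f g : ℝ → ℝ)
    (hf_pos : ∀ t ∈ Set.Icc a x, 0 < f t)
    (hg_pos : ∀ t ∈ Set.Icc a x, 0 < g t)
    (hfg_int : katIntegrable α ρ η κ β a x (fun t => f t * g t))
    (hsum_int : katIntegrable α ρ η κ β a x (fun t => (f t + g t) ^ 2))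
    (hm : 0 < m) (hmM : m ≤ M)
    (hbound : ∀ t ∈ Set.Icc a x, m ≤ f t / g t ∧ f t / g t ≤ M) :
    (1 / M) * katI α ρ η κ β a x (fun t => f t * g t) ≤
        (1 / ((m + 1) * (M + 1))) * katI α ρ η κ β a x (fun t => (f t + g t) ^ 2) ∧
      (1 / ((m + 1) * (M + 1))) * katI α ρ η κ β a x (fun t => (f t + g t) ^ 2) ≤
        (1 / m) * katI α ρ η κ β a x (fun t => f t * g t) := by
  have hM : 0 < M := hm.trans_le hmM
  have hc : 0 < (m + 1) * (M + 1) := by positivity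
  have key : ∀ t ∈ Set.Icc a x,
      (m + 1) * (M + 1) * (f t * g t) ≤ M * (f t + g t) ^ 2 ∧
      m * (f t + g t) ^ 2 ≤ (m + 1) * (M + 1) * (f t * g t) := by
    intro t ht
    have hf := hf_pos t ht
    have hg := hg_pos t ht
    obtain ⟨h1, h2⟩ := hbound t ht
    have hmg : m * g t ≤ f t := (le_div_iff₀ hg).mp h1
    have hMg : f t ≤ M * g t := (div_le_iff₀ hg).mp h2
    constructor
    · nlinarith [mul_nonneg hf.le (by linarith : (0:ℝ) ≤ f t - m * g t),
        mul_nonneg hg.le (by linarith : (0:ℝ) ≤ M * g t - f t), mul_pos hf hg]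
    · nlinarith [mul_nonneg hf.le (by linarith : (0:ℝ) ≤ M * g t - f t),
        mul_nonneg hg.le (by linarith : (0:ℝ) ≤ f t - m * g t), mul_pos hf hg]
  exact ⟨katI_div_mono α ρ η κ β a x M ((m + 1) * (M + 1)) hα hρ ha hax _ _
      hfg_int hsum_int hM hc (fun t ht => (key t ht).1),
    katI_div_mono α ρ η κ β a x ((m + 1) * (M + 1)) m hα hρ ha hax _ _
      hsum_int hfg_int hc hm (fun t ht => (key t ht).2)⟩
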